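/- Let K̂₀¹(t,r,a,b) := G(r,a,b)^{-1} λ₁⁰(r,a,b) e^{λ₂⁰(r,a,b)t}. Then for all j, m ∈ ℕ, |∂^{j+m}/(∂aʲ ∂bᵐ) K̂₀¹(t,r,a,b)| ≤ C e^{-c r^{2σ₁}t} r^{2(σ-2σ₁)+2j(σ₂-σ₁)+2m(σ-2σ₁)} for all (r,a,b) ∈ (0,ε*] × [0,1]² and t > 0. -/

import Mathlib

open Real Set

noncomputable def Gamma1 (σ₁ σ₂ r a : ℝ) : ℝ := (1 + a * r ^ (2*(σ₂-σ₁)))⁻¹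

noncomputable def Gamma2 (σ σ₁ σ₂ r a b : ℝ) : ℝ :=
  Real.sqrt (1 - 4*b*r ^ (2*(σ-2*σ₁)) * (Gamma1 σ₁ σ₂ r a)^2)

/-- Mixed partial derivative `∂^{j+m}/(∂aʲ ∂bᵐ)`. -/
noncomputable def pderiv2 (j m : ℕ) (f : ℝ → ℝ → ℝ) (a b : ℝ) : ℝ :=
  iteratedDeriv m (fun b' => iteratedDeriv j (fun a' => f a' b') a) b

noncomputable def lam1 (σ σ₁ σ₂ r a b : ℝ) : ℝ :=
  -2 * r ^ (2*(σ-σ₁)) * Gamma1 σ₁ σ₂ r a * (1 + Gamma2 σ σ₁ σ₂ r a b)⁻¹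

noncomputable def lam2 (σ σ₁ σ₂ r a b : ℝ) : ℝ :=
  -(r ^ (2*σ₁) / 2) * (1 + a * r ^ (2*(σ₂-σ₁))) * (1 + Gamma2 σ σ₁ σ₂ r a b)

noncomputable def Gfun (σ σ₁ σ₂ r a b : ℝ) : ℝ :=
  r ^ (2*σ₁) * (1 + a * r ^ (2*(σ₂-σ₁))) * Gamma2 σ σ₁ σ₂ r a b

noncomputable def K01 (σ σ₁ σ₂ t r a b : ℝ) : ℝ :=
  (Gfun σ σ₁ σ₂ r a b)⁻¹ * lam1 σ σ₁ σ₂ r a b * Real.exp (lam2 σ σ₁ σ₂ r a b * t)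

/-!
With `α = r^{2(σ₂-σ₁)} a`, `β = r^{2(σ-2σ₁)} b` and `s = r^{2σ₁} t` one has
`Γ₂ = Γ(α, β) := √(1 - 4β/(1+α)²)`, `λ₂⁰ t = -μ(α, β) s` with `μ = (1+α)(1+Γ)/2`, and
`K̂₀¹ = r^{2(σ-2σ₁)} ψ(α, β) e^{-μ(α, β) s}` with `ψ = -2 (1+α)⁻² Γ⁻¹ (1+Γ)⁻¹`.
So every `∂_a` (resp. `∂_b`) costs a factor `r^{2(σ₂-σ₁)}` (resp. `r^{2(σ-2σ₁)}`), and it remains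
to bound the `(α, β)`-derivatives of `ψ e^{-μ s}` uniformly. These are finite sums
`c_k(α, β) s^k e^{-μ(α, β) s}` with smooth `c_k`. The hypothesis `Γ₂ ≥ 1/2` keeps `(α, β)` in a
compact set where `ψ, μ` are smooth and `μ ≥ 3/4`, so the `c_k` are bounded there and
`s^k e^{-μ s} ≲ e^{-3s/8}`.
-/

open Filter Topology
open scoped Nat ContDiff

theorem iteratedDeriv_comp_mul_left {𝕜 : Type*} [NontriviallyNormedField 𝕜] (n : ℕ) (c : 𝕜)
    (f : 𝕜 → 𝕜) :
    iteratedDeriv n (fun x => f (c * x)) = fun x => c ^ n * iteratedDeriv n f (c * x) := by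
  induction n with
  | zero => simp
  | succ n ih =>
    funext x
    rw [iteratedDeriv_succ, ih, deriv_const_mul_field, deriv_comp_mul_left, iteratedDeriv_succ,
      smul_eq_mul, pow_succ, mul_assoc]

theorem pderiv2_const_mul_comp_mul (j m : ℕ) (C u v : ℝ) (f : ℝ → ℝ → ℝ) (a b : ℝ) :
    pderiv2 j m (fun x y => C * f (u * x) (v * y)) a b
      = C * u ^ j * v ^ m * pderiv2 j m f (u * a) (v * b) := by
  have hinner : ∀ y, iteratedDeriv j (fun x => C * f (u * x) (v * y)) a
      = C * u ^ j * iteratedDeriv j (fun x => f x (v * y)) (u * a) := fun y => by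
    rw [iteratedDeriv_const_mul_field, iteratedDeriv_comp_mul_left j u (fun x => f x (v * y)),
      mul_assoc]
  simp only [pderiv2, hinner, iteratedDeriv_const_mul_field,
    iteratedDeriv_comp_mul_left m v (fun y => iteratedDeriv j (fun x => f x y) (u * a))]
  ring

theorem pow_mul_exp_neg_le {δ μ s : ℝ} (hδ : 0 < δ) (hμ : δ ≤ μ) (hs : 0 ≤ s) (k : ℕ) :
    s ^ k * exp (-μ * s) ≤ k ! * (2 / δ) ^ k * exp (-(δ / 2) * s) := by
  have hpow : (δ / 2 * s) ^ k ≤ k ! * exp (δ / 2 * s) := by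
    have := pow_div_factorial_le_exp _ (by positivity : 0 ≤ δ / 2 * s) k
    rw [div_le_iff₀ (by positivity)] at this
    linarith
  calc s ^ k * exp (-μ * s) ≤ s ^ k * exp (-δ * s) := by gcongr
    _ = (2 / δ) ^ k * (δ / 2 * s) ^ k * exp (-δ * s) := by
      rw [← mul_pow]; field_simp
    _ ≤ (2 / δ) ^ k * (k ! * exp (δ / 2 * s)) * exp (-δ * s) := by gcongr
    _ = k ! * (2 / δ) ^ k * (exp (δ / 2 * s) * exp (-δ * s)) := by ring
    _ = k ! * (2 / δ) ^ k * exp (-(δ / 2) * s) := by rw [← exp_add]; ring_nf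

theorem rpow_mul_mem_Icc {x εs r a : ℝ} (hx : 0 ≤ x) (hr : r ∈ Ioc 0 εs) (ha : a ∈ Icc 0 1) :
    r ^ x * a ∈ Icc 0 (εs ^ x) := by
  have hrx : 0 ≤ r ^ x := rpow_nonneg hr.1.le x
  exact ⟨mul_nonneg hrx ha.1, (mul_le_of_le_one_right hrx ha.2).trans
    (rpow_le_rpow hr.1.le hr.2 hx)⟩

theorem deriv_slice_fst_eq_fderiv {F : Type*} [NormedAddCommGroup F] [NormedSpace ℝ F]
    {f : ℝ × ℝ → F} {p : ℝ × ℝ} (hf : DifferentiableAt ℝ f p) :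
    deriv (fun x => f (x, p.2)) p.1 = fderiv ℝ f p (1, 0) :=
  (hf.hasFDerivAt.comp_hasDerivAt p.1 ((hasDerivAt_id _).prodMk (hasDerivAt_const _ _))).deriv

theorem deriv_slice_snd_eq_fderiv {F : Type*} [NormedAddCommGroup F] [NormedSpace ℝ F]
    {f : ℝ × ℝ → F} {p : ℝ × ℝ} (hf : DifferentiableAt ℝ f p) :
    deriv (fun y => f (p.1, y)) p.2 = fderiv ℝ f p (0, 1) :=
  (hf.hasFDerivAt.comp_hasDerivAt p.2 ((hasDerivAt_const _ _).prodMk (hasDerivAt_id _))).deriv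

section ExpPoly

variable {E : Type*} [NormedAddCommGroup E] [NormedSpace ℝ E]

inductive IsExpPoly (U : Set E) (μ : E → ℝ) : (E → ℝ → ℝ) → Prop
  | monomial {c : E → ℝ} (hc : ContDiffOn ℝ ∞ c U) (k : ℕ) :
      IsExpPoly U μ fun p s => c p * s ^ k * exp (-μ p * s)
  | add {F G : E → ℝ → ℝ} : IsExpPoly U μ F → IsExpPoly U μ G →
      IsExpPoly U μ fun p s => F p s + G p s
  | congr {F G : E → ℝ → ℝ} : IsExpPoly U μ F → (∀ p ∈ U, ∀ s, F p s = G p s) →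
      IsExpPoly U μ G

variable {U : Set E} {μ : E → ℝ} {F : E → ℝ → ℝ}

namespace IsExpPoly

theorem contDiffOn (hμ : ContDiffOn ℝ ∞ μ U) (hF : IsExpPoly U μ F) (s : ℝ) :
    ContDiffOn ℝ ∞ (fun p => F p s) U := by
  induction hF with
  | monomial hc k => exact (hc.mul contDiffOn_const).mul (hμ.neg.mul contDiffOn_const).exp
  | add _ _ ihF ihG => exact ihF.add ihG
  | congr _ h ih => exact ih.congr fun p hp => (h p hp s).symm

theorem differentiableAt (hU : IsOpen U) (hμ : ContDiffOn ℝ ∞ μ U) (hF : IsExpPoly U μ F)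
    {p : E} (hp : p ∈ U) (s : ℝ) : DifferentiableAt ℝ (fun q => F q s) p :=
  ((hF.contDiffOn hμ s).differentiableOn (by simp)).differentiableAt (hU.mem_nhds hp)

theorem fderiv_apply (hU : IsOpen U) (hμ : ContDiffOn ℝ ∞ μ U) (hF : IsExpPoly U μ F) (v : E) :
    IsExpPoly U μ fun p s => fderiv ℝ (fun q => F q s) p v := by
  have hderiv : ∀ {c : E → ℝ}, ContDiffOn ℝ ∞ c U → ContDiffOn ℝ ∞ (fun p => fderiv ℝ c p v) U :=
    fun hc => (hc.fderiv_of_isOpen hU (by simp)).clm_apply contDiffOn_const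
  induction hF with
  | @monomial c hc k =>
    refine .congr (.add (.monomial (hderiv hc) k)
      (.monomial ((hderiv hμ).neg.mul hc) (k + 1))) fun p hp s => ?_
    have hcd := (hc.differentiableOn (by simp)).differentiableAt (hU.mem_nhds hp)
    have hμd := (hμ.differentiableOn (by simp)).differentiableAt (hU.mem_nhds hp)
    have hmon : HasFDerivAt (fun q => c q * s ^ k * exp (-μ q * s)) _ p :=
      (hcd.hasFDerivAt.mul_const (s ^ k)).fun_mul (hμd.hasFDerivAt.neg.mul_const s).exp
    rw [hmon.fderiv]
    simp only [neg_mul, Pi.neg_apply, smul_neg, add_apply, neg_apply, smul_apply, smul_eq_mul]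
    ring
  | add hF hG ihF ihG =>
    refine .congr (.add ihF ihG) fun p hp s => ?_
    beta_reduce
    rw [fderiv_fun_add (hF.differentiableAt hU hμ hp s) (hG.differentiableAt hU hμ hp s)]
    rfl
  | @congr F G _ h ih =>
    refine .congr ih fun p hp s => ?_
    have hFG : (fun q => F q s) =ᶠ[𝓝 p] fun q => G q s :=
      eventually_of_mem (hU.mem_nhds hp) fun q hq => h q hq s
    rw [hFG.fderiv_eq]

theorem exists_bound {K : Set E} (hK : IsCompact K) (hKU : K ⊆ U) {δ : ℝ} (hδ : 0 < δ)
    (hμK : ∀ p ∈ K, δ ≤ μ p) (hF : IsExpPoly U μ F) :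
    ∃ C, ∀ p ∈ K, ∀ s, 0 ≤ s → |F p s| ≤ C * exp (-(δ / 2) * s) := by
  induction hF with
  | @monomial c hc k =>
    obtain ⟨M, hM⟩ := hK.exists_bound_of_continuousOn (hc.continuousOn.mono hKU)
    refine ⟨M * (k ! * (2 / δ) ^ k), fun p hp s hs => ?_⟩
    have hcM : |c p| ≤ M := by simpa using hM p hp
    calc |c p * s ^ k * exp (-μ p * s)| = |c p| * (s ^ k * exp (-μ p * s)) := by
          rw [abs_mul, abs_mul, abs_of_nonneg (pow_nonneg hs k), abs_of_pos (exp_pos _), mul_assoc]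
      _ ≤ M * (k ! * (2 / δ) ^ k * exp (-(δ / 2) * s)) :=
          mul_le_mul hcM (pow_mul_exp_neg_le hδ (hμK p hp) hs k)
            (mul_nonneg (pow_nonneg hs k) (exp_pos _).le) ((abs_nonneg _).trans hcM)
      _ = _ := by ring
  | add _ _ ihF ihG =>
    obtain ⟨C₁, h₁⟩ := ihF
    obtain ⟨C₂, h₂⟩ := ihG
    refine ⟨C₁ + C₂, fun p hp s hs => ?_⟩
    calc |_| ≤ _ := abs_add_le _ _
      _ ≤ _ := add_le_add (h₁ p hp s hs) (h₂ p hp s hs)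
      _ = _ := by ring
  | congr _ h ih =>
    obtain ⟨C, hC⟩ := ih
    exact ⟨C, fun p hp s hs => h p (hKU hp) s ▸ hC p hp s hs⟩

end IsExpPoly

end ExpPoly

namespace IsExpPoly

variable {U : Set (ℝ × ℝ)} {μ : ℝ × ℝ → ℝ} {F : ℝ × ℝ → ℝ → ℝ}

theorem deriv_fst (hU : IsOpen U) (hμ : ContDiffOn ℝ ∞ μ U) (hF : IsExpPoly U μ F) :
    IsExpPoly U μ fun p s => deriv (fun x => F (x, p.2) s) p.1 :=
  (hF.fderiv_apply hU hμ (1, 0)).congr fun _ hp s =>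
    (deriv_slice_fst_eq_fderiv (hF.differentiableAt hU hμ hp s)).symm

theorem deriv_snd (hU : IsOpen U) (hμ : ContDiffOn ℝ ∞ μ U) (hF : IsExpPoly U μ F) :
    IsExpPoly U μ fun p s => deriv (fun y => F (p.1, y) s) p.2 :=
  (hF.fderiv_apply hU hμ (0, 1)).congr fun _ hp s =>
    (deriv_slice_snd_eq_fderiv (hF.differentiableAt hU hμ hp s)).symm

theorem iteratedDeriv_fst (hU : IsOpen U) (hμ : ContDiffOn ℝ ∞ μ U) (hF : IsExpPoly U μ F)
    (j : ℕ) : IsExpPoly U μ fun p s => iteratedDeriv j (fun x => F (x, p.2) s) p.1 := by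
  induction j with
  | zero => simpa using hF
  | succ j ih => simpa only [iteratedDeriv_succ] using ih.deriv_fst hU hμ

theorem iteratedDeriv_snd (hU : IsOpen U) (hμ : ContDiffOn ℝ ∞ μ U) (hF : IsExpPoly U μ F)
    (m : ℕ) : IsExpPoly U μ fun p s => iteratedDeriv m (fun y => F (p.1, y) s) p.2 := by
  induction m with
  | zero => simpa using hF
  | succ m ih => simpa only [iteratedDeriv_succ] using ih.deriv_snd hU hμ

theorem pderiv2 (hU : IsOpen U) (hμ : ContDiffOn ℝ ∞ μ U) (hF : IsExpPoly U μ F) (j m : ℕ) :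
    IsExpPoly U μ fun p s => _root_.pderiv2 j m (fun x y => F (x, y) s) p.1 p.2 :=
  (hF.iteratedDeriv_fst hU hμ j).iteratedDeriv_snd hU hμ m

end IsExpPoly

noncomputable section

def scaledGamma (p : ℝ × ℝ) : ℝ := √(1 - 4 * p.2 * ((1 + p.1)⁻¹) ^ 2)

def scaledRate (p : ℝ × ℝ) : ℝ := (1 + p.1) * (1 + scaledGamma p) / 2

def scaledAmplitude (p : ℝ × ℝ) : ℝ :=
  -2 * ((1 + p.1)⁻¹) ^ 2 * (scaledGamma p)⁻¹ * (1 + scaledGamma p)⁻¹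

def scaledKernel (p : ℝ × ℝ) (s : ℝ) : ℝ := scaledAmplitude p * exp (-scaledRate p * s)

def scaledDomain : Set (ℝ × ℝ) := {p | -1 < p.1} ∩ scaledGamma ⁻¹' Ioi 0

def scaledCompact (A B : ℝ) : Set (ℝ × ℝ) := (Icc 0 A ×ˢ Icc 0 B) ∩ scaledGamma ⁻¹' Ici (1 / 2)

end

theorem continuousOn_scaledGamma : ContinuousOn scaledGamma {p | -1 < p.1} := by
  intro p hp
  have h : 1 + p.1 ≠ 0 := by change -1 < p.1 at hp; linarith
  unfold scaledGamma
  exact (continuousAt_const.sub ((continuousAt_const.mul continuousAt_snd).mul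
    ((continuousAt_const.add continuousAt_fst).inv₀ h |>.pow 2))).sqrt.continuousWithinAt

theorem isOpen_scaledDomain : IsOpen scaledDomain :=
  continuousOn_scaledGamma.isOpen_inter_preimage (isOpen_lt continuous_const continuous_fst)
    isOpen_Ioi

theorem isCompact_scaledCompact (A B : ℝ) : IsCompact (scaledCompact A B) := by
  have hsub : Icc 0 A ×ˢ Icc 0 B ⊆ {p : ℝ × ℝ | -1 < p.1} := fun p hp => by
    change -1 < p.1; linarith [hp.1.1]
  exact (isCompact_Icc.prod isCompact_Icc).of_isClosed_subset
    ((continuousOn_scaledGamma.mono hsub).preimage_isClosed_of_isClosed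
      (isClosed_Icc.prod isClosed_Icc) isClosed_Ici) inter_subset_left

theorem scaledCompact_subset_scaledDomain (A B : ℝ) : scaledCompact A B ⊆ scaledDomain :=
  fun p ⟨⟨⟨hα, _⟩, _⟩, hΓ⟩ => ⟨show -1 < p.1 by linarith,
    lt_of_lt_of_le (by norm_num : (0 : ℝ) < 1 / 2) hΓ⟩

theorem three_quarters_le_scaledRate {A B : ℝ} {p : ℝ × ℝ} (hp : p ∈ scaledCompact A B) :
    3 / 4 ≤ scaledRate p := by
  obtain ⟨⟨⟨hα, _⟩, _⟩, hΓ⟩ := hp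
  have hΓ : 1 / 2 ≤ scaledGamma p := hΓ
  unfold scaledRate
  nlinarith

theorem contDiffAt_scaledGamma {p : ℝ × ℝ} (hp : p ∈ scaledDomain) :
    ContDiffAt ℝ ∞ scaledGamma p := by
  obtain ⟨hα, hΓ⟩ := hp
  have h : 1 + p.1 ≠ 0 := by change -1 < p.1 at hα; linarith
  exact (contDiffAt_const.sub ((contDiffAt_const.mul contDiffAt_snd).mul
    ((contDiffAt_const.add contDiffAt_fst).inv h |>.pow 2))).sqrt (Real.sqrt_pos.mp hΓ).ne'

theorem contDiffOn_scaledRate : ContDiffOn ℝ ∞ scaledRate scaledDomain := fun _ hp =>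
  ((contDiffAt_const.add contDiffAt_fst).mul
    (contDiffAt_const.add (contDiffAt_scaledGamma hp)) |>.div_const 2).contDiffWithinAt

theorem contDiffOn_scaledAmplitude : ContDiffOn ℝ ∞ scaledAmplitude scaledDomain := by
  intro p hp
  have hΓ : 0 < scaledGamma p := hp.2
  have h : 1 + p.1 ≠ 0 := by have : -1 < p.1 := hp.1; linarith
  exact (((contDiffAt_const.mul ((contDiffAt_const.add contDiffAt_fst).inv h |>.pow 2)).mul
    ((contDiffAt_scaledGamma hp).inv hΓ.ne')).mul
    ((contDiffAt_const.add (contDiffAt_scaledGamma hp)).inv (by positivity))).contDiffWithinAt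

theorem isExpPoly_scaledKernel : IsExpPoly scaledDomain scaledRate scaledKernel :=
  .congr (.monomial contDiffOn_scaledAmplitude 0) fun _ _ _ => by simp [scaledKernel]

theorem Gamma2_eq_scaledGamma (σ σ₁ σ₂ r a b : ℝ) :
    Gamma2 σ σ₁ σ₂ r a b = scaledGamma (r ^ (2 * (σ₂ - σ₁)) * a, r ^ (2 * (σ - 2 * σ₁)) * b) := by
  unfold Gamma2 scaledGamma Gamma1
  congr 1
  ring

theorem K01_eq_scaledKernel {r : ℝ} (hr : 0 < r) (σ σ₁ σ₂ t a b : ℝ) :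
    K01 σ σ₁ σ₂ t r a b = r ^ (2 * (σ - 2 * σ₁)) *
      scaledKernel (r ^ (2 * (σ₂ - σ₁)) * a, r ^ (2 * (σ - 2 * σ₁)) * b) (r ^ (2 * σ₁) * t) := by
  have hX : r ^ (2 * σ₁) ≠ 0 := (rpow_pos_of_pos hr _).ne'
  have hsplit : r ^ (2 * (σ - σ₁)) = r ^ (2 * (σ - 2 * σ₁)) * r ^ (2 * σ₁) := by
    rw [← rpow_add hr]; ring_nf
  unfold K01 scaledKernel Gfun lam1 lam2 scaledAmplitude scaledRate Gamma1
  rw [← Gamma2_eq_scaledGamma, hsplit]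
  field_simp

theorem pderiv2_K01_eq {r : ℝ} (hr : 0 < r) (σ σ₁ σ₂ t : ℝ) (j m : ℕ) (a b : ℝ) :
    pderiv2 j m (fun a' b' => K01 σ σ₁ σ₂ t r a' b') a b
      = r ^ (2 * (σ - 2 * σ₁) + 2 * (j : ℝ) * (σ₂ - σ₁) + 2 * (m : ℝ) * (σ - 2 * σ₁)) *
        pderiv2 j m (fun x y => scaledKernel (x, y) (r ^ (2 * σ₁) * t))
          (r ^ (2 * (σ₂ - σ₁)) * a) (r ^ (2 * (σ - 2 * σ₁)) * b) := by
  have hexp : r ^ (2 * (σ - 2 * σ₁) + 2 * (j : ℝ) * (σ₂ - σ₁) + 2 * (m : ℝ) * (σ - 2 * σ₁))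
      = r ^ (2 * (σ - 2 * σ₁)) * (r ^ (2 * (σ₂ - σ₁))) ^ j * (r ^ (2 * (σ - 2 * σ₁))) ^ m := by
    rw [← rpow_mul_natCast hr.le, ← rpow_mul_natCast hr.le, ← rpow_add hr, ← rpow_add hr]
    ring_nf
  simp_rw [K01_eq_scaledKernel hr]
  rw [hexp]
  exact pderiv2_const_mul_comp_mul j m _ _ _
    (fun x y => scaledKernel (x, y) (r ^ (2 * σ₁) * t)) a b

theorem stmt9_general (σ σ₁ σ₂ εs : ℝ) (h12 : σ₁ < σ / 2)
    (h22 : σ / 2 < σ₂)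
    (hΓ : ∀ r ∈ Set.Ioc (0:ℝ) εs, ∀ a ∈ Set.Icc (0:ℝ) 1, ∀ b ∈ Set.Icc (0:ℝ) 1,
      (1:ℝ)/2 ≤ Gamma2 σ σ₁ σ₂ r a b)
    (j m : ℕ) :
    ∃ C > 0, ∃ c > 0, ∀ t > 0, ∀ r ∈ Set.Ioc (0:ℝ) εs, ∀ a ∈ Set.Icc (0:ℝ) 1,
      ∀ b ∈ Set.Icc (0:ℝ) 1,
      |pderiv2 j m (fun a' b' => K01 σ σ₁ σ₂ t r a' b') a b|
        ≤ C * Real.exp (-c * r ^ (2*σ₁) * t)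
            * r ^ (2*(σ-2*σ₁) + 2*(j:ℝ)*(σ₂-σ₁) + 2*(m:ℝ)*(σ-2*σ₁)) := by
  have hα : 0 ≤ 2 * (σ₂ - σ₁) := by linarith
  have hβ : 0 ≤ 2 * (σ - 2 * σ₁) := by linarith
  obtain ⟨C, hC⟩ := (isExpPoly_scaledKernel.pderiv2 isOpen_scaledDomain contDiffOn_scaledRate
    j m).exists_bound (isCompact_scaledCompact _ _) (scaledCompact_subset_scaledDomain _ _)
    (by norm_num) fun _ => three_quarters_le_scaledRate
  refine ⟨max C 1, by positivity, 3 / 4 / 2, by norm_num, fun t ht r hr a ha b hb => ?_⟩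
  have hmem : (r ^ (2 * (σ₂ - σ₁)) * a, r ^ (2 * (σ - 2 * σ₁)) * b) ∈
      scaledCompact (εs ^ (2 * (σ₂ - σ₁))) (εs ^ (2 * (σ - 2 * σ₁))) :=
    ⟨⟨rpow_mul_mem_Icc hα hr ha, rpow_mul_mem_Icc hβ hr hb⟩,
      by rw [mem_preimage, mem_Ici, ← Gamma2_eq_scaledGamma]; exact hΓ r hr a ha b hb⟩
  have hs : 0 ≤ r ^ (2 * σ₁) * t := (mul_pos (rpow_pos_of_pos hr.1 _) ht).le
  rw [pderiv2_K01_eq hr.1, abs_mul, abs_of_pos (rpow_pos_of_pos hr.1 _), mul_comm]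
  refine mul_le_mul_of_nonneg_right ?_ (rpow_nonneg hr.1.le _)
  calc _ ≤ C * exp (-(3 / 4 / 2) * (r ^ (2 * σ₁) * t)) := hC _ hmem _ hs
    _ ≤ max C 1 * exp (-(3 / 4 / 2) * r ^ (2 * σ₁) * t) := by
      rw [← mul_assoc]; exact mul_le_mul_of_nonneg_right (le_max_left _ _) (exp_pos _).le

theorem stmt9 (σ σ₁ σ₂ εs c₁ : ℝ) (hσ : 1 ≤ σ) (hσ₁ : 0 ≤ σ₁) (h12 : σ₁ < σ / 2)
    (h22 : σ / 2 < σ₂) (h2σ : σ₂ ≤ σ) (hε : 0 < εs) (hc₁ : 0 < c₁)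
    (hΓ : ∀ r ∈ Set.Ioc (0:ℝ) εs, ∀ a ∈ Set.Icc (0:ℝ) 1, ∀ b ∈ Set.Icc (0:ℝ) 1,
      (1:ℝ)/2 ≤ Gamma2 σ σ₁ σ₂ r a b)
    (hlam : ∀ r ∈ Set.Ioc (0:ℝ) εs, ∀ a ∈ Set.Icc (0:ℝ) 1, ∀ b ∈ Set.Icc (0:ℝ) 1,
      lam2 σ σ₁ σ₂ r a b ≤ -c₁ * r ^ (2*σ₁))
    (j m : ℕ) :
    ∃ C > 0, ∃ c > 0, ∀ t > 0, ∀ r ∈ Set.Ioc (0:ℝ) εs, ∀ a ∈ Set.Icc (0:ℝ) 1,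
      ∀ b ∈ Set.Icc (0:ℝ) 1,
      |pderiv2 j m (fun a' b' => K01 σ σ₁ σ₂ t r a' b') a b|
        ≤ C * Real.exp (-c * r ^ (2*σ₁) * t)
            * r ^ (2*(σ-2*σ₁) + 2*(j:ℝ)*(σ₂-σ₁) + 2*(m:ℝ)*(σ-2*σ₁)) :=
  stmt9_general σ σ₁ σ₂ εs h12 h22 hΓ j m
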